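/- arXiv:2409.00370 — 2 statements merged into one kernel-verified Lean document; each statement's English description precedes it below -/
import Mathlib

section
/- For p, q > 1, the function φ_{G,p,q} : ℝ^N → ℝ is continuously differentiable, and there is a constant κ'_{G,p} independent of q such that ‖Dφ_{G,p,q}(x)‖ ≤ κ'_{G,p} ‖x‖^{p-1} for all x ∈ ℝ^N. -/
open Finset Real Filter
open scoped RealInnerProductSpace

/-- generalized edge gradient: `f_{e,q}(x) = (Σ_{i<j, i,j∈e} |x_i - x_j|^q)^{1/q}` -/
noncomputable def feq {N : ℕ} (q : ℝ) (e : Finset (Fin N)) (x : EuclideanSpace ℝ (Fin N)) : ℝ :=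
  (∑ p ∈ (e ×ˢ e).filter (fun p => p.1 < p.2), |x p.1 - x p.2| ^ q) ^ (1/q)

/-- `f_e(x) = max_{i,j ∈ e} |x_i - x_j|` -/
noncomputable def femax {N : ℕ} (e : Finset (Fin N)) (x : EuclideanSpace ℝ (Fin N)) : ℝ :=
  ⨆ p ∈ (e ×ˢ e : Finset (Fin N × Fin N)), |x p.1 - x p.2|

/-- `φ_{G,p,q}(x) = (1/p) Σ_{e∈E} w(e) f_{e,q}(x)^p` -/
noncomputable def phiq {N : ℕ} (E : Finset (Finset (Fin N))) (w : Finset (Fin N) → ℝ)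
    (p q : ℝ) (x : EuclideanSpace ℝ (Fin N)) : ℝ :=
  (1/p) * ∑ e ∈ E, w e * feq q e x ^ p

/-- `φ_{G,p}(x) = (1/p) Σ_{e∈E} w(e) f_e(x)^p` -/
noncomputable def phim {N : ℕ} (E : Finset (Finset (Fin N))) (w : Finset (Fin N) → ℝ)
    (p : ℝ) (x : EuclideanSpace ℝ (Fin N)) : ℝ :=
  (1/p) * ∑ e ∈ E, w e * femax e x ^ p

/-- `ν_E = max_{e∈E} #e(#e-1)/2` -/
def nuE {N : ℕ} (E : Finset (Finset (Fin N))) : ℕ :=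
  E.sup fun e => e.card * (e.card - 1) / 2

/-- `i` and `j` are joined by a chain of `k` hyperedges of `E`. -/
def chained {N : ℕ} (E : Finset (Finset (Fin N))) (i j : Fin N) (k : ℕ) : Prop :=
  ∃ μ : ℕ → Fin N, μ 0 = i ∧ μ k = j ∧ ∀ l < k, ∃ e ∈ E, μ l ∈ e ∧ μ (l + 1) ∈ e

/-- hypergraph distance: minimal chain length -/
noncomputable def hdist {N : ℕ} (E : Finset (Finset (Fin N))) (i j : Fin N) : ℕ :=
  sInf {k | chained E i j k}

/-- hypergraph diameter -/
noncomputable def hdiam {N : ℕ} (E : Finset (Finset (Fin N))) : ℕ :=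
  Finset.univ.sup fun i => Finset.univ.sup fun j => hdist E i j

/-- mean-value vector `x̄` -/
noncomputable def meanVec {N : ℕ} (z : EuclideanSpace ℝ (Fin N)) : EuclideanSpace ℝ (Fin N) :=
  WithLp.toLp 2 fun _ => (∑ i, z i) / N

namespace Stmt6Aux
variable {N : ℕ}

noncomputable def Lc (c : Fin N × Fin N) : EuclideanSpace ℝ (Fin N) →L[ℝ] ℝ :=
  EuclideanSpace.proj c.1 - EuclideanSpace.proj c.2

lemma abs_apply_le (x : EuclideanSpace ℝ (Fin N)) (i : Fin N) : |x i| ≤ ‖x‖ := by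
  rw [EuclideanSpace.norm_eq]
  calc |x i| = Real.sqrt (‖x i‖^2) := by rw [Real.sqrt_sq_eq_abs]; simp
  _ ≤ _ := Real.sqrt_le_sqrt (Finset.single_le_sum (f := fun j => ‖x j‖^2)
      (fun j _ => sq_nonneg _) (mem_univ i))

lemma abs_diff_le (x : EuclideanSpace ℝ (Fin N)) (c : Fin N × Fin N) :
    |x c.1 - x c.2| ≤ 2 * ‖x‖ := by
  calc |x c.1 - x c.2| ≤ |x c.1| + |x c.2| := abs_sub _ _
  _ ≤ ‖x‖ + ‖x‖ := add_le_add (abs_apply_le x c.1) (abs_apply_le x c.2)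
  _ = 2 * ‖x‖ := by ring

lemma norm_Lc_le (c : Fin N × Fin N) : ‖(Lc c : EuclideanSpace ℝ (Fin N) →L[ℝ] ℝ)‖ ≤ 2 := by
  apply ContinuousLinearMap.opNorm_le_bound _ (by norm_num)
  intro x
  have : Lc c x = x c.1 - x c.2 := rfl
  rw [this, Real.norm_eq_abs]
  exact abs_diff_le x c

/-- continuity of the scalar derivative `t ↦ r * |t|^(r-2) * t` -/
lemma continuous_dabs {r : ℝ} (hr : 1 < r) :
    Continuous (fun t : ℝ => r * |t| ^ (r - 2) * t) := by
  rw [continuous_iff_continuousAt]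
  intro t
  rcases eq_or_ne t 0 with rfl | ht
  · have h0 : r * |(0:ℝ)| ^ (r-2) * 0 = 0 := by ring
    unfold ContinuousAt
    simp only []
    rw [h0]
    apply squeeze_zero_norm (a := fun t : ℝ => |r| * |t| ^ (r-1))
    · intro s
      rcases eq_or_ne s 0 with rfl | hs
      · simp [Real.zero_rpow (by intro h; linarith : r - 1 ≠ 0)]
      · have : ‖r * |s| ^ (r-2) * s‖ = |r| * (|s| ^ (r-2) * |s|) := by
          rw [Real.norm_eq_abs, abs_mul, abs_mul,
            abs_of_nonneg (Real.rpow_nonneg (abs_nonneg s) _), mul_assoc]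
        rw [this]
        have h2 : |s| ^ (r-2) * |s| = |s| ^ (r-1) := by
          nth_rewrite 2 [← Real.rpow_one |s|]
          rw [← Real.rpow_add (abs_pos.2 hs)]; ring_nf
        rw [h2]
    · have hc : Tendsto (fun s : ℝ => |r| * |s| ^ (r-1)) (nhds 0)
          (nhds (|r| * |(0:ℝ)| ^ (r-1))) :=
        (continuous_const.mul (continuous_abs.rpow_const (fun _ => Or.inr (by linarith : (0:ℝ) ≤ r - 1)))).tendsto 0
      simpa [Real.zero_rpow (by intro h; linarith : r - 1 ≠ 0)] using hc
  · exact ((continuousAt_const.mul ((continuous_abs.continuousAt).rpow_const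
      (Or.inl (abs_ne_zero.2 ht)))).mul continuousAt_id)


/-- `S q P x = Σ_{c ∈ P} |x c.1 - x c.2|^q` -/
noncomputable def S (q : ℝ) (P : Finset (Fin N × Fin N)) (x : EuclideanSpace ℝ (Fin N)) : ℝ :=
  ∑ c ∈ P, |x c.1 - x c.2| ^ q

noncomputable def DS (q : ℝ) (P : Finset (Fin N × Fin N)) (x : EuclideanSpace ℝ (Fin N)) :
    EuclideanSpace ℝ (Fin N) →L[ℝ] ℝ :=
  ∑ c ∈ P, (q * |x c.1 - x c.2| ^ (q - 2) * (x c.1 - x c.2)) • Lc c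

lemma S_nonneg (q : ℝ) (P : Finset (Fin N × Fin N)) (x : EuclideanSpace ℝ (Fin N)) :
    0 ≤ S q P x :=
  Finset.sum_nonneg fun c _ => Real.rpow_nonneg (abs_nonneg _) q

lemma term_le_S {q : ℝ} (hq : 0 < q) (P : Finset (Fin N × Fin N)) (x : EuclideanSpace ℝ (Fin N))
    {c : Fin N × Fin N} (hc : c ∈ P) : |x c.1 - x c.2| ^ q ≤ S q P x :=
  Finset.single_le_sum (f := fun c => |x c.1 - x c.2| ^ q)
    (fun c _ => Real.rpow_nonneg (abs_nonneg _) q) hc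

lemma S_eq_zero {q : ℝ} (hq : 0 < q) {P : Finset (Fin N × Fin N)}
    {x : EuclideanSpace ℝ (Fin N)} (h : S q P x = 0) :
    ∀ c ∈ P, x c.1 - x c.2 = 0 := by
  intro c hc
  have h1 := (Finset.sum_eq_zero_iff_of_nonneg
    (fun c _ => Real.rpow_nonneg (abs_nonneg (x c.1 - x c.2)) q)).1 h c hc
  exact abs_eq_zero.1 ((Real.rpow_eq_zero (abs_nonneg _) hq.ne').1 h1)

lemma continuous_S (q : ℝ) (hq : 0 < q) (P : Finset (Fin N × Fin N)) :
    Continuous (S q P) := by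
  apply continuous_finset_sum
  intro c _
  exact (continuous_abs.comp (Lc c).continuous).rpow_const (fun _ => Or.inr hq.le)

lemma continuous_DS {q : ℝ} (hq : 1 < q) (P : Finset (Fin N × Fin N)) :
    Continuous (fun x => DS q P x) := by
  apply continuous_finset_sum
  intro c _
  exact ((continuous_dabs hq).comp (Lc c).continuous).smul continuous_const

lemma hasFDerivAt_S {q : ℝ} (hq : 1 < q) (P : Finset (Fin N × Fin N))
    (x : EuclideanSpace ℝ (Fin N)) : HasFDerivAt (S q P) (DS q P x) x := by
  apply HasFDerivAt.fun_sum
  intro c _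
  exact (hasDerivAt_abs_rpow (x c.1 - x c.2) hq).comp_hasFDerivAt x (Lc c).hasFDerivAt

lemma DS_zero {q : ℝ} {P : Finset (Fin N × Fin N)} {x : EuclideanSpace ℝ (Fin N)}
    (h : ∀ c ∈ P, x c.1 - x c.2 = 0) : DS q P x = 0 := by
  unfold DS
  apply Finset.sum_eq_zero
  intro c hc
  rw [h c hc]
  simp


lemma S_le {q : ℝ} (hq : 1 ≤ q) (P : Finset (Fin N × Fin N)) (x : EuclideanSpace ℝ (Fin N)) :
    S q P x ≤ (2 * ((P.card : ℝ) + 1) * ‖x‖) ^ q := by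
  have hq0 : (0:ℝ) ≤ q := by linarith
  have h1 : S q P x ≤ ∑ _c ∈ P, (2 * ‖x‖) ^ q :=
    Finset.sum_le_sum fun c _ =>
      Real.rpow_le_rpow (abs_nonneg _) (abs_diff_le x c) hq0
  have h2 : ∑ _c ∈ P, (2 * ‖x‖) ^ q = (P.card : ℝ) * (2 * ‖x‖) ^ q := by
    rw [Finset.sum_const, nsmul_eq_mul]
  have h3 : (P.card : ℝ) ≤ ((P.card : ℝ) + 1) ^ q := by
    calc (P.card : ℝ) ≤ (P.card : ℝ) + 1 := by linarith
    _ = ((P.card : ℝ) + 1) ^ (1:ℝ) := (Real.rpow_one _).symm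
    _ ≤ ((P.card : ℝ) + 1) ^ q :=
      Real.rpow_le_rpow_of_exponent_le (by
        have := Nat.cast_nonneg (α := ℝ) P.card; linarith) hq
  calc S q P x ≤ (P.card : ℝ) * (2 * ‖x‖) ^ q := by rw [← h2]; exact h1
  _ ≤ ((P.card : ℝ) + 1) ^ q * (2 * ‖x‖) ^ q :=
      mul_le_mul_of_nonneg_right h3 (Real.rpow_nonneg (by positivity) q)
  _ = (((P.card : ℝ) + 1) * (2 * ‖x‖)) ^ q :=
      (Real.mul_rpow (by positivity) (by positivity)).symm
  _ = (2 * ((P.card : ℝ) + 1) * ‖x‖) ^ q := by ring_nf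

lemma abs_coef {q : ℝ} (hq : 1 < q) (t : ℝ) :
    |q * |t| ^ (q - 2) * t| = q * |t| ^ (q - 1) := by
  rcases eq_or_ne t 0 with rfl | ht
  · simp [Real.zero_rpow (by intro h; linarith : q - 1 ≠ 0)]
  · rw [abs_mul, abs_mul, abs_of_nonneg (Real.rpow_nonneg (abs_nonneg t) _),
      abs_of_pos (by linarith : (0:ℝ) < q), mul_assoc]
    congr 1
    nth_rewrite 2 [← Real.rpow_one |t|]
    rw [← Real.rpow_add (abs_pos.2 ht)]
    ring_nf

lemma norm_DS_le {q : ℝ} (hq : 1 < q) (P : Finset (Fin N × Fin N))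
    (x : EuclideanSpace ℝ (Fin N)) :
    ‖DS q P x‖ ≤ 2 * q * (P.card : ℝ) * S q P x ^ ((q-1)/q) := by
  have hq0 : (0:ℝ) < q := by linarith
  have hexp : (0:ℝ) ≤ (q-1)/q := by apply div_nonneg <;> linarith
  have hSe : (0:ℝ) ≤ S q P x ^ ((q-1)/q) := Real.rpow_nonneg (S_nonneg q P x) _
  have key : ∀ c ∈ P, ‖(q * |x c.1 - x c.2| ^ (q - 2) * (x c.1 - x c.2)) • Lc c‖
      ≤ q * S q P x ^ ((q-1)/q) * 2 := by
    intro c hc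
    rw [norm_smul _ (Lc c), Real.norm_eq_abs, abs_coef hq]
    have h1 : |x c.1 - x c.2| ^ (q-1) ≤ S q P x ^ ((q-1)/q) := by
      have e1 : |x c.1 - x c.2| ^ (q-1) = (|x c.1 - x c.2| ^ q) ^ ((q-1)/q) := by
        rw [← Real.rpow_mul (abs_nonneg _)]
        congr 1
        field_simp
      rw [e1]
      exact Real.rpow_le_rpow (Real.rpow_nonneg (abs_nonneg _) q)
        (term_le_S hq0 P x hc) hexp
    apply mul_le_mul
    · exact mul_le_mul_of_nonneg_left h1 hq0.le
    · exact norm_Lc_le c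
    · exact norm_nonneg _
    · positivity
  have h2 : ‖DS q P x‖
      ≤ ∑ c ∈ P, ‖(q * |x c.1 - x c.2| ^ (q - 2) * (x c.1 - x c.2)) • Lc c‖ := by
    rw [show DS q P x
      = ∑ c ∈ P, (q * |x c.1 - x c.2| ^ (q - 2) * (x c.1 - x c.2)) • Lc c from rfl]
    exact norm_sum_le _ _
  have h3 : ∑ c ∈ P, ‖(q * |x c.1 - x c.2| ^ (q - 2) * (x c.1 - x c.2)) • Lc c‖
      ≤ (P.card : ℝ) * (q * S q P x ^ ((q-1)/q) * 2) := by
    refine (Finset.sum_le_sum key).trans (le_of_eq ?_)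
    rw [Finset.sum_const, nsmul_eq_mul]
  have := h2.trans h3
  nlinarith [this]

/-- derivative of `x ↦ S q P x ^ (p/q)` -/
noncomputable def Gd (p q : ℝ) (P : Finset (Fin N × Fin N)) (x : EuclideanSpace ℝ (Fin N)) :
    EuclideanSpace ℝ (Fin N) →L[ℝ] ℝ :=
  ((p/q) * S q P x ^ (p/q - 1)) • DS q P x

lemma Gd_zero {p q : ℝ} (hq : 0 < q) {P : Finset (Fin N × Fin N)}
    {x : EuclideanSpace ℝ (Fin N)} (hS : S q P x = 0) : Gd p q P x = 0 := by
  rw [Gd, DS_zero (S_eq_zero hq hS), smul_zero]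

lemma norm_Gd_le {p q : ℝ} (hp : 1 < p) (hq : 1 < q) (P : Finset (Fin N × Fin N))
    (x : EuclideanSpace ℝ (Fin N)) :
    ‖Gd p q P x‖ ≤ 2 * p * (P.card : ℝ) * S q P x ^ ((p-1)/q) := by
  have hq0 : (0:ℝ) < q := by linarith
  have hp0 : (0:ℝ) < p := by linarith
  rcases eq_or_lt_of_le (S_nonneg q P x) with hS | hS
  · rw [Gd_zero hq0 hS.symm, norm_zero]
    positivity
  · rw [Gd, norm_smul _ (DS q P x), Real.norm_eq_abs,
      abs_of_nonneg (by positivity : (0:ℝ) ≤ (p/q) * S q P x ^ (p/q - 1))]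
    calc (p/q) * S q P x ^ (p/q - 1) * ‖DS q P x‖
        ≤ (p/q) * S q P x ^ (p/q - 1) * (2 * q * (P.card : ℝ) * S q P x ^ ((q-1)/q)) := by
          apply mul_le_mul_of_nonneg_left (norm_DS_le hq P x) (by positivity)
    _ = 2 * p * (P.card : ℝ) * (S q P x ^ (p/q - 1) * S q P x ^ ((q-1)/q)) := by
          field_simp
    _ = 2 * p * (P.card : ℝ) * S q P x ^ ((p-1)/q) := by
          rw [← Real.rpow_add hS]
          congr 2
          field_simp
          ring


lemma hasFDerivAt_G {p q : ℝ} (hp : 1 < p) (hq : 1 < q) (P : Finset (Fin N × Fin N))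
    (x : EuclideanSpace ℝ (Fin N)) :
    HasFDerivAt (fun y => S q P y ^ (p/q)) (Gd p q P x) x := by
  have hq0 : (0:ℝ) < q := by linarith
  have hp0 : (0:ℝ) < p := by linarith
  have hpq : p / q ≠ 0 := by positivity
  rcases eq_or_lt_of_le (S_nonneg q P x) with hS | hS
  · -- S x = 0
    rw [Gd_zero hq0 hS.symm, hasFDerivAt_iff_isLittleO_nhds_zero]
    rw [Asymptotics.isLittleO_iff]
    intro ε hε
    set C : ℝ := 2 * ((P.card : ℝ) + 1) with hC
    have hC0 : (0:ℝ) < C := by positivity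
    have htd : Tendsto (fun h : EuclideanSpace ℝ (Fin N) => C ^ p * ‖h‖ ^ (p-1))
        (nhds 0) (nhds 0) := by
      have hc : Tendsto (fun h : EuclideanSpace ℝ (Fin N) => C ^ p * ‖h‖ ^ (p-1))
          (nhds 0) (nhds (C ^ p * ‖(0 : EuclideanSpace ℝ (Fin N))‖ ^ (p-1))) :=
        (continuous_const.mul (continuous_norm.rpow_const
          (fun _ => Or.inr (by linarith : (0:ℝ) ≤ p - 1)))).tendsto 0
      simpa [Real.zero_rpow (by intro h; linarith : p - 1 ≠ 0)] using hc
    filter_upwards [htd.eventually (gt_mem_nhds hε)] with h hh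
    have hSxh : S q P (x + h) = S q P h := by
      apply Finset.sum_congr rfl
      intro c hc
      have hz := S_eq_zero hq0 hS.symm c hc
      have : (x + h) c.1 - (x + h) c.2 = h c.1 - h c.2 := by
        have e1 : (x + h) c.1 = x c.1 + h c.1 := rfl
        have e2 : (x + h) c.2 = x c.2 + h c.2 := rfl
        rw [e1, e2]; linarith [hz]
      rw [this]
    rw [← hS, Real.zero_rpow hpq]
    simp only [ContinuousLinearMap.zero_apply, sub_zero]
    rw [hSxh]
    have hb : S q P h ^ (p/q) ≤ C ^ p * ‖h‖ ^ (p-1) * ‖h‖ := by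
      have h1 : S q P h ≤ (C * ‖h‖) ^ q := S_le hq.le P h
      have h2 : S q P h ^ (p/q) ≤ ((C * ‖h‖) ^ q) ^ (p/q) :=
        Real.rpow_le_rpow (S_nonneg q P h) h1 (by positivity)
      have h3 : ((C * ‖h‖) ^ q) ^ (p/q) = (C * ‖h‖) ^ p := by
        rw [← Real.rpow_mul (by positivity)]
        congr 1
        field_simp
      have h4 : (C * ‖h‖) ^ p = C ^ p * ‖h‖ ^ p :=
        Real.mul_rpow hC0.le (norm_nonneg h)
      have h5 : ‖h‖ ^ p = ‖h‖ ^ (p-1) * ‖h‖ := by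
        rcases eq_or_ne h 0 with rfl | hh0
        · simp [Real.zero_rpow (by intro hh1; linarith : p ≠ 0)]
        · rw [← Real.rpow_add_one (norm_ne_zero_iff.2 hh0) (p-1)]
          ring_nf
      rw [h3, h4, h5] at h2
      linarith [h2]
    have hnn : (0:ℝ) ≤ S q P h ^ (p/q) := Real.rpow_nonneg (S_nonneg q P h) _
    rw [Real.norm_eq_abs, abs_of_nonneg hnn]
    calc S q P h ^ (p/q) ≤ C ^ p * ‖h‖ ^ (p-1) * ‖h‖ := hb
    _ ≤ ε * ‖h‖ := mul_le_mul_of_nonneg_right hh.le (norm_nonneg h)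
  · -- S x > 0
    have hd : HasDerivAt (fun u : ℝ => u ^ (p/q)) ((p/q) * S q P x ^ (p/q - 1)) (S q P x) :=
      Real.hasDerivAt_rpow_const (Or.inl hS.ne')
    exact hd.comp_hasFDerivAt x (hasFDerivAt_S hq P x)

lemma continuous_Gd {p q : ℝ} (hp : 1 < p) (hq : 1 < q) (P : Finset (Fin N × Fin N)) :
    Continuous (fun x => Gd p q P x) := by
  have hq0 : (0:ℝ) < q := by linarith
  rw [continuous_iff_continuousAt]
  intro x
  rcases eq_or_ne (S q P x) 0 with hS | hS
  · unfold ContinuousAt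
    rw [show (fun x => Gd p q P x) x = 0 from Gd_zero hq0 hS]
    apply squeeze_zero_norm (a := fun y => 2 * p * (P.card : ℝ) * S q P y ^ ((p-1)/q))
      (fun y => norm_Gd_le hp hq P y)
    have hc : Tendsto (fun y => 2 * p * (P.card : ℝ) * S q P y ^ ((p-1)/q)) (nhds x)
        (nhds (2 * p * (P.card : ℝ) * S q P x ^ ((p-1)/q))) :=
      (continuous_const.mul ((continuous_S q hq0 P).rpow_const
        (fun _ => Or.inr (by apply div_nonneg <;> linarith)))).tendsto x
    rw [hS, Real.zero_rpow (by
      intro hz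
      have : p - 1 = 0 := by
        field_simp at hz
        linarith [hz]
      linarith)] at hc
    simpa using hc
  · exact (continuousAt_const.mul (((continuous_S q hq0 P).continuousAt).rpow_const
      (Or.inl hS))).smul ((continuous_DS hq P).continuousAt)

lemma norm_Gd_le' {p q : ℝ} (hp : 1 < p) (hq : 1 < q) (P : Finset (Fin N × Fin N))
    (x : EuclideanSpace ℝ (Fin N)) :
    ‖Gd p q P x‖ ≤ 2 * p * (P.card : ℝ) * (2 * ((P.card : ℝ) + 1)) ^ (p-1) * ‖x‖ ^ (p-1) := by
  have hexp : (0:ℝ) ≤ (p-1)/q := by apply div_nonneg <;> linarith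
  have h1 := norm_Gd_le hp hq P x
  have h2 : S q P x ^ ((p-1)/q) ≤ (2 * ((P.card : ℝ) + 1)) ^ (p-1) * ‖x‖ ^ (p-1) := by
    have h3 : S q P x ^ ((p-1)/q) ≤ ((2 * ((P.card : ℝ) + 1) * ‖x‖) ^ q) ^ ((p-1)/q) :=
      Real.rpow_le_rpow (S_nonneg q P x) (S_le hq.le P x) hexp
    have h4 : ((2 * ((P.card : ℝ) + 1) * ‖x‖) ^ q) ^ ((p-1)/q)
        = (2 * ((P.card : ℝ) + 1) * ‖x‖) ^ (p-1) := by
      rw [← Real.rpow_mul (by positivity)]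
      congr 1
      field_simp
    have h5 : (2 * ((P.card : ℝ) + 1) * ‖x‖) ^ (p-1)
        = (2 * ((P.card : ℝ) + 1)) ^ (p-1) * ‖x‖ ^ (p-1) :=
      Real.mul_rpow (by positivity) (norm_nonneg x)
    rw [h4, h5] at h3
    exact h3
  calc ‖Gd p q P x‖ ≤ 2 * p * (P.card : ℝ) * S q P x ^ ((p-1)/q) := h1
  _ ≤ 2 * p * (P.card : ℝ) * ((2 * ((P.card : ℝ) + 1)) ^ (p-1) * ‖x‖ ^ (p-1)) :=
      mul_le_mul_of_nonneg_left h2 (by positivity)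
  _ = 2 * p * (P.card : ℝ) * (2 * ((P.card : ℝ) + 1)) ^ (p-1) * ‖x‖ ^ (p-1) := by ring


noncomputable def pairs (e : Finset (Fin N)) : Finset (Fin N × Fin N) :=
  (e ×ˢ e).filter (fun p => p.1 < p.2)

noncomputable def Dphi (E : Finset (Finset (Fin N))) (w : Finset (Fin N) → ℝ) (p q : ℝ)
    (x : EuclideanSpace ℝ (Fin N)) : EuclideanSpace ℝ (Fin N) →L[ℝ] ℝ :=
  (1/p) • ∑ e ∈ E, w e • Gd p q (pairs e) x

end Stmt6Aux

section Final

open Stmt6Aux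

theorem stmt6 (N : ℕ) (E : Finset (Finset (Fin N))) (hE : ∀ e ∈ E, 2 ≤ e.card)
    (w : Finset (Fin N) → ℝ) (hw : ∀ e ∈ E, 0 < w e) (p : ℝ) (hp : 1 < p) :
    (∀ q : ℝ, 1 < q → ContDiff ℝ 1 (phiq E w p q)) ∧
    ∃ κ > (0 : ℝ), ∀ q : ℝ, 1 < q → ∀ x : EuclideanSpace ℝ (Fin N),
      ‖gradient (phiq E w p q) x‖ ≤ κ * ‖x‖ ^ (p - 1) := by
  have hp0 : (0:ℝ) < p := by linarith
  -- rewrite phiq in terms of S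
  have hfun : ∀ q : ℝ, 1 < q →
      phiq E w p q = fun x => (1/p) * ∑ e ∈ E, w e * S q (pairs e) x ^ (p/q) := by
    intro q hq
    have hq0 : (0:ℝ) < q := by linarith
    funext x
    unfold phiq feq
    congr 1
    apply Finset.sum_congr rfl
    intro e _
    congr 1
    have : (∑ c ∈ (e ×ˢ e).filter (fun p => p.1 < p.2), |x c.1 - x c.2| ^ q)
        = S q (pairs e) x := rfl
    rw [this, ← Real.rpow_mul (S_nonneg q (pairs e) x)]
    congr 1
    field_simp
  have hFD : ∀ q : ℝ, 1 < q → ∀ x : EuclideanSpace ℝ (Fin N),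
      HasFDerivAt (phiq E w p q) (Dphi E w p q x) x := by
    intro q hq x
    rw [hfun q hq]
    unfold Dphi
    exact (HasFDerivAt.fun_sum (fun e _ =>
      (hasFDerivAt_G hp hq (pairs e) x).const_mul (w e))).const_mul (1/p)
  have hDcont : ∀ q : ℝ, 1 < q → Continuous (fun x => Dphi E w p q x) := by
    intro q hq
    unfold Dphi
    exact (continuous_finset_sum E (fun e _ =>
      (continuous_Gd hp hq (pairs e)).const_smul (w e))).const_smul (1/p)
  constructor
  · intro q hq
    rw [contDiff_one_iff_fderiv]
    refine ⟨fun x => (hFD q hq x).differentiableAt, ?_⟩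
    have heq : fderiv ℝ (phiq E w p q) = fun x => Dphi E w p q x :=
      funext fun x => (hFD q hq x).fderiv
    rw [heq]
    exact hDcont q hq
  · set K : Finset (Fin N) → ℝ :=
      fun e => 2 * p * ((pairs e).card : ℝ) * (2 * (((pairs e).card : ℝ) + 1)) ^ (p-1) with hK
    have hK0 : ∀ e, 0 ≤ K e := by
      intro e
      rw [hK]
      positivity
    refine ⟨1 + (1/p) * ∑ e ∈ E, w e * K e, by
      have : 0 ≤ (1/p) * ∑ e ∈ E, w e * K e := by
        apply mul_nonneg (by positivity)
        apply Finset.sum_nonneg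
        intro e he
        exact mul_nonneg (hw e he).le (hK0 e)
      linarith, ?_⟩
    intro q hq x
    have hgrad : ‖gradient (phiq E w p q) x‖ = ‖fderiv ℝ (phiq E w p q) x‖ := by
      rw [show gradient (phiq E w p q) x
        = (InnerProductSpace.toDual ℝ _).symm (fderiv ℝ (phiq E w p q) x) from rfl]
      exact LinearIsometryEquiv.norm_map _ _
    rw [hgrad, (hFD q hq x).fderiv]
    have hb : ‖Dphi E w p q x‖ ≤ ((1/p) * ∑ e ∈ E, w e * K e) * ‖x‖ ^ (p-1) := by
      unfold Dphi
      rw [norm_smul (1/p) (∑ e ∈ E, w e • Gd p q (pairs e) x)]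
      have h1 : ‖∑ e ∈ E, w e • Gd p q (pairs e) x‖
          ≤ ∑ e ∈ E, w e * (K e * ‖x‖ ^ (p-1)) := by
        refine (norm_sum_le _ _).trans (Finset.sum_le_sum ?_)
        intro e he
        rw [norm_smul (w e) (Gd p q (pairs e) x), Real.norm_eq_abs, abs_of_pos (hw e he)]
        apply mul_le_mul_of_nonneg_left _ (hw e he).le
        have := norm_Gd_le' hp hq (pairs e) x
        rw [hK]
        calc ‖Gd p q (pairs e) x‖
            ≤ 2 * p * ((pairs e).card : ℝ) * (2 * (((pairs e).card : ℝ) + 1)) ^ (p-1)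
              * ‖x‖ ^ (p-1) := this
        _ = 2 * p * ((pairs e).card : ℝ) * (2 * (((pairs e).card : ℝ) + 1)) ^ (p-1)
              * ‖x‖ ^ (p-1) := rfl
      have h2 : ∑ e ∈ E, w e * (K e * ‖x‖ ^ (p-1))
          = (∑ e ∈ E, w e * K e) * ‖x‖ ^ (p-1) := by
        rw [Finset.sum_mul]
        apply Finset.sum_congr rfl
        intro e _
        ring
      rw [Real.norm_eq_abs, abs_of_pos (by positivity : (0:ℝ) < 1/p)]
      calc (1/p) * ‖∑ e ∈ E, w e • Gd p q (pairs e) x‖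
          ≤ (1/p) * ((∑ e ∈ E, w e * K e) * ‖x‖ ^ (p-1)) := by
            apply mul_le_mul_of_nonneg_left _ (by positivity)
            rw [← h2]
            exact h1
      _ = ((1/p) * ∑ e ∈ E, w e * K e) * ‖x‖ ^ (p-1) := by ring
    calc ‖Dphi E w p q x‖ ≤ ((1/p) * ∑ e ∈ E, w e * K e) * ‖x‖ ^ (p-1) := hb
    _ ≤ (1 + (1/p) * ∑ e ∈ E, w e * K e) * ‖x‖ ^ (p-1) := by
        apply mul_le_mul_of_nonneg_right _ (Real.rpow_nonneg (norm_nonneg x) _)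
        linarith
end Final
end

section
/- Let G be connected and p, q > 1. For any i, j ∈ V, |x_i - x_j| ≤ (diam_G)^{1/p'} (min_{e∈E} w(e))^{-1/p} (Σ_{e∈E} w(e) f_{e,q}(x)^p)^{1/p} for all x ∈ ℝ^N, where 1/p + 1/p' = 1. -/
open Finset Real Filter
open scoped RealInnerProductSpace

/- telescoping -/
lemma telescope {N : ℕ} (x : EuclideanSpace ℝ (Fin N)) (μ : ℕ → Fin N) :
    ∀ k, |x (μ 0) - x (μ k)| ≤ ∑ l ∈ Finset.range k, |x (μ l) - x (μ (l+1))| := by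
  intro k
  induction k with
  | zero => simp
  | succ k ih =>
    rw [Finset.sum_range_succ]
    calc |x (μ 0) - x (μ (k+1))| ≤ |x (μ 0) - x (μ k)| + |x (μ k) - x (μ (k+1))| := by
          have := abs_sub_le (x (μ 0)) (x (μ k)) (x (μ (k+1))); linarith [this]
      _ ≤ _ := by linarith [ih]

lemma feq_nonneg {N : ℕ} (q : ℝ) (e : Finset (Fin N)) (x : EuclideanSpace ℝ (Fin N)) :
    0 ≤ feq q e x := by
  apply Real.rpow_nonneg
  exact Finset.sum_nonneg fun p _ => Real.rpow_nonneg (abs_nonneg _) _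

lemma abs_le_feq {N : ℕ} {q : ℝ} (hq : 1 < q) {e : Finset (Fin N)}
    (x : EuclideanSpace ℝ (Fin N)) {a b : Fin N} (ha : a ∈ e) (hb : b ∈ e) :
    |x a - x b| ≤ feq q e x := by
  rcases lt_trichotomy a b with h | h | h
  · have hmem : (a, b) ∈ (e ×ˢ e).filter (fun p => p.1 < p.2) := by
      simp [Finset.mem_filter, Finset.mem_product, ha, hb, h]
    have hle : |x a - x b| ^ q ≤ ∑ p ∈ (e ×ˢ e).filter (fun p => p.1 < p.2), |x p.1 - x p.2| ^ q :=
      Finset.single_le_sum (f := fun p : Fin N × Fin N => |x p.1 - x p.2| ^ q)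
        (fun p _ => Real.rpow_nonneg (abs_nonneg _) _) hmem
    have hq0 : (0:ℝ) < q := by linarith
    calc |x a - x b| = (|x a - x b| ^ q) ^ (1/q) := by
          rw [← Real.rpow_mul (abs_nonneg _), mul_one_div, div_self hq0.ne', Real.rpow_one]
      _ ≤ feq q e x := Real.rpow_le_rpow (Real.rpow_nonneg (abs_nonneg _) _) hle (by positivity)
  · subst h; simpa using feq_nonneg q e x
  · have hmem : (b, a) ∈ (e ×ˢ e).filter (fun p => p.1 < p.2) := by
      simp [Finset.mem_filter, Finset.mem_product, ha, hb, h]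
    have hle : |x b - x a| ^ q ≤ ∑ p ∈ (e ×ˢ e).filter (fun p => p.1 < p.2), |x p.1 - x p.2| ^ q :=
      Finset.single_le_sum (f := fun p : Fin N × Fin N => |x p.1 - x p.2| ^ q)
        (fun p _ => Real.rpow_nonneg (abs_nonneg _) _) hmem
    have hq0 : (0:ℝ) < q := by linarith
    rw [abs_sub_comm]
    calc |x b - x a| = (|x b - x a| ^ q) ^ (1/q) := by
          rw [← Real.rpow_mul (abs_nonneg _), mul_one_div, div_self hq0.ne', Real.rpow_one]
      _ ≤ feq q e x := Real.rpow_le_rpow (Real.rpow_nonneg (abs_nonneg _) _) hle (by positivity)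

lemma min_chain_distinct {N : ℕ} (E : Finset (Finset (Fin N))) (i j : Fin N)
    (hconn : ∃ k, chained E i j k) :
    ∃ (μ : ℕ → Fin N) (e : ℕ → Finset (Fin N)),
      μ 0 = i ∧ μ (hdist E i j) = j ∧
      (∀ l < hdist E i j, e l ∈ E ∧ μ l ∈ e l ∧ μ (l + 1) ∈ e l) ∧
      (∀ a < hdist E i j, ∀ b < hdist E i j, a ≠ b → e a ≠ e b) := by
  set k := hdist E i j with hkdef
  have hk : chained E i j k := Nat.sInf_mem hconn
  obtain ⟨μ, hμ0, hμk, hμ⟩ := hk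
  have hech : ∀ l, l < k → ∃ e ∈ E, μ l ∈ e ∧ μ (l + 1) ∈ e := hμ
  classical
  set e : ℕ → Finset (Fin N) := fun l =>
    if hl : l < k then (hech l hl).choose else ∅ with hedef
  have he : ∀ l < k, e l ∈ E ∧ μ l ∈ e l ∧ μ (l + 1) ∈ e l := by
    intro l hl
    have := (hech l hl).choose_spec
    simp only [hedef, dif_pos hl]
    exact ⟨this.1, this.2⟩
  refine ⟨μ, e, hμ0, hμk, he, ?_⟩
  intro a ha b hb hab heq
  -- wlog a < b
  wlog hlt : a < b generalizing a b
  · exact this b hb a ha (Ne.symm hab) heq.symm (by omega)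
  -- build a shorter chain
  set k' := k - (b - a) with hk'def
  have hk'lt : k' < k := by omega
  have hchain' : chained E i j k' := by
    refine ⟨fun l => if l ≤ a then μ l else μ (l + (b - a)), by simp [hμ0], ?_, ?_⟩
    · have h1 : ¬ (k' ≤ a) := by omega
      have h2 : k' + (b - a) = k := by omega
      simp [h1, h2, hμk]
    · intro l hl
      by_cases h1 : l + 1 ≤ a
      · obtain ⟨hE1, hE2, hE3⟩ := he l (by omega)
        exact ⟨e l, hE1, by simp only [if_pos (by omega : l ≤ a)]; exact hE2,
          by simp only [if_pos h1]; exact hE3⟩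
      · by_cases h0 : l ≤ a
        · have hla : l = a := by omega
          obtain ⟨hE1, hE2, hE3⟩ := he l (by omega)
          obtain ⟨hF1, hF2, hF3⟩ := he b (by omega)
          refine ⟨e l, hE1, by simp only [if_pos h0]; exact hE2, ?_⟩
          simp only [if_neg h1]
          have h3 : l + 1 + (b - a) = b + 1 := by omega
          rw [h3, hla, heq]
          exact hF3
        · obtain ⟨hE1, hE2, hE3⟩ := he (l + (b - a)) (by omega)
          refine ⟨e (l + (b - a)), hE1, by simp only [if_neg h0]; exact hE2, ?_⟩
          simp only [if_neg h1]
          have h4 : l + 1 + (b - a) = l + (b - a) + 1 := by omega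
          rw [h4]; exact hE3
  have hle : hdist E i j ≤ k' := Nat.sInf_le hchain'
  omega

theorem stmt9 (N : ℕ) (E : Finset (Finset (Fin N))) (hE : ∀ e ∈ E, 2 ≤ e.card)
    (hEne : E.Nonempty)
    (w : Finset (Fin N) → ℝ) (hw : ∀ e ∈ E, 0 < w e)
    (hconn : ∀ i j : Fin N, ∃ k, chained E i j k)
    (p q p' : ℝ) (hp : 1 < p) (hq : 1 < q) (hp' : 1/p + 1/p' = 1)
    (i j : Fin N) (x : EuclideanSpace ℝ (Fin N)) :
    |x i - x j| ≤ (hdiam E : ℝ) ^ (1/p') * (E.inf' hEne w) ^ (-(1/p)) *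
      (∑ e ∈ E, w e * feq q e x ^ p) ^ (1/p) := by
  obtain ⟨μ, e, hμ0, hμk, he, hinj⟩ := min_chain_distinct E i j (hconn i j)
  set k := hdist E i j with hkdef
  set m := E.inf' hEne w with hmdef
  have hm : 0 < m := by
    obtain ⟨e0, he0, heq0⟩ := Finset.exists_mem_eq_inf' hEne w
    rw [hmdef, heq0]; exact hw e0 he0
  set S := ∑ e ∈ E, w e * feq q e x ^ p with hSdef
  have hS0 : 0 ≤ S := Finset.sum_nonneg fun e' he' =>
    mul_nonneg (hw e' he').le (Real.rpow_nonneg (feq_nonneg _ _ _) _)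
  have hp0 : (0:ℝ) < p := by linarith
  have h1 : |x i - x j| ≤ ∑ l ∈ Finset.range k, feq q (e l) x := by
    rw [← hμ0, ← hμk]
    exact (telescope x μ k).trans (Finset.sum_le_sum fun l hl =>
      abs_le_feq hq x (he l (Finset.mem_range.mp hl)).2.1 (he l (Finset.mem_range.mp hl)).2.2)
  have h2 : ∑ l ∈ Finset.range k, feq q (e l) x ≤
      (k : ℝ) ^ (1 - p⁻¹) * (∑ l ∈ Finset.range k, feq q (e l) x ^ p) ^ p⁻¹ := by
    have := Real.inner_le_weight_mul_Lp_of_nonneg (Finset.range k) hp.le (fun _ => 1)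
      (fun l => feq q (e l) x) (fun _ => zero_le_one) (fun l => feq_nonneg _ _ _)
    simpa using this
  have h3 : ∑ l ∈ Finset.range k, feq q (e l) x ^ p ≤ m⁻¹ * S := by
    have hstep2 : ∀ l ∈ Finset.range k,
        feq q (e l) x ^ p ≤ m⁻¹ * (w (e l) * feq q (e l) x ^ p) := by
      intro l hl
      have hl' := Finset.mem_range.mp hl
      have hwm : m ≤ w (e l) := Finset.inf'_le w (he l hl').1
      have hfp : (0:ℝ) ≤ feq q (e l) x ^ p := Real.rpow_nonneg (feq_nonneg _ _ _) _
      calc feq q (e l) x ^ p = m⁻¹ * (m * feq q (e l) x ^ p) := by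
            rw [← mul_assoc, inv_mul_cancel₀ hm.ne', one_mul]
        _ ≤ m⁻¹ * (w (e l) * feq q (e l) x ^ p) := by
            apply mul_le_mul_of_nonneg_left _ (inv_nonneg.mpr hm.le)
            exact mul_le_mul_of_nonneg_right hwm hfp
    calc ∑ l ∈ Finset.range k, feq q (e l) x ^ p
        ≤ ∑ l ∈ Finset.range k, m⁻¹ * (w (e l) * feq q (e l) x ^ p) :=
          Finset.sum_le_sum hstep2
      _ = m⁻¹ * ∑ l ∈ Finset.range k, w (e l) * feq q (e l) x ^ p := by
          rw [Finset.mul_sum]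
      _ ≤ m⁻¹ * S := by
          apply mul_le_mul_of_nonneg_left _ (inv_nonneg.mpr hm.le)
          have hinjfun : ∀ a ∈ Finset.range k, ∀ b ∈ Finset.range k, e a = e b → a = b := by
            intro a ha b hb hab
            by_contra h
            exact hinj a (Finset.mem_range.mp ha) b (Finset.mem_range.mp hb) h hab
          rw [← Finset.sum_image (g := e) (f := fun e' => w e' * feq q e' x ^ p) hinjfun]
          apply Finset.sum_le_sum_of_subset_of_nonneg
          · intro e' he'
            obtain ⟨l, hl, rfl⟩ := Finset.mem_image.mp he'
            exact (he l (Finset.mem_range.mp hl)).1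
          · intro e' he' _
            exact mul_nonneg (hw e' he').le (Real.rpow_nonneg (feq_nonneg _ _ _) _)
  have hexp0 : (0:ℝ) ≤ 1 - p⁻¹ := by
    have : p⁻¹ * p = 1 := inv_mul_cancel₀ hp0.ne'
    nlinarith [inv_nonneg.mpr hp0.le]
  have hk_le : (k:ℝ) ≤ (hdiam E : ℝ) := by
    have h : hdist E i j ≤ hdiam E :=
      le_trans (Finset.le_sup (Finset.mem_univ j))
        (Finset.le_sup (f := fun i => Finset.univ.sup fun j => hdist E i j)
          (Finset.mem_univ i))
    exact_mod_cast h
  have h4 : (∑ l ∈ Finset.range k, feq q (e l) x ^ p) ^ p⁻¹ ≤ (m⁻¹ * S) ^ p⁻¹ :=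
    Real.rpow_le_rpow (Finset.sum_nonneg fun l _ => Real.rpow_nonneg (feq_nonneg _ _ _) _)
      h3 (inv_nonneg.mpr hp0.le)
  have h5 : (m⁻¹ * S) ^ p⁻¹ = m ^ (-(1/p)) * S ^ (1/p) := by
    rw [Real.mul_rpow (inv_nonneg.mpr hm.le) hS0, Real.rpow_neg hm.le,
      ← Real.inv_rpow hm.le, one_div]
  have h6 : (k:ℝ) ^ (1-p⁻¹) ≤ (hdiam E:ℝ) ^ (1-p⁻¹) :=
    Real.rpow_le_rpow (Nat.cast_nonneg k) hk_le hexp0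
  have hexp : 1 - p⁻¹ = 1/p' := by
    have h1p : 1/p' = 1 - 1/p := by linarith
    rw [h1p, one_div]
  calc |x i - x j|
      ≤ (k : ℝ) ^ (1 - p⁻¹) * (∑ l ∈ Finset.range k, feq q (e l) x ^ p) ^ p⁻¹ := h1.trans h2
    _ ≤ (hdiam E : ℝ) ^ (1-p⁻¹) * (m⁻¹ * S) ^ p⁻¹ := by
        apply mul_le_mul h6 h4 _ (Real.rpow_nonneg (Nat.cast_nonneg _) _)
        exact Real.rpow_nonneg (Finset.sum_nonneg fun l _ =>
          Real.rpow_nonneg (feq_nonneg _ _ _) _) _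
    _ = (hdiam E : ℝ) ^ (1/p') * m ^ (-(1/p)) * S ^ (1/p) := by
        rw [h5, hexp, mul_assoc]
end
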